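/- For every k ≥ 1 and every z ∈ Z, the iterated commutator [z, x, (2^k−1)…, x] lies in the subgroup L_k·Q_k (a subgroup of Γ since L_k is normal). (Lemma 3.3(i) of the paper.) -/

import Mathlib

namespace Paper

variable {G : Type*} [Group G]

/-- The paper's commutator `[a,b] = a⁻¹ b⁻¹ a b`. -/
def pc {G : Type*} [Group G] (a b : G) : G := a⁻¹ * b⁻¹ * a * b

/-- The left-normed iterated commutator `[a, x, (r)…, x]`. -/
def itc {G : Type*} [Group G] (x a : G) : ℕ → G
  | 0 => a
  | r + 1 => pc (itc x a r) x

/-- `c_i`, where `c_1 = y` and `c_{i+1} = [c_i, x]`; equivalently `c_i = [y, x, (i-1)…, x]`. -/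
def cc (x y : G) (i : ℕ) : G := itc x y (i - 1)

/-- `z_{m,n} = [c_m, c_n]`. -/
def zz (x y : G) (m n : ℕ) : G := pc (cc x y m) (cc x y n)

/-- `H = ⟨c_i : i ≥ 1⟩`. -/
def Hsub (x y : G) : Subgroup G :=
  Subgroup.closure {g | ∃ i, 1 ≤ i ∧ g = cc x y i}

/-- `Z = ⟨c_l², z_{m,n} : l, m, n ≥ 1⟩`. -/
def Zsub (x y : G) : Subgroup G :=
  Subgroup.closure ({g | ∃ l, 1 ≤ l ∧ g = cc x y l ^ 2} ∪
    {g | ∃ m n, 1 ≤ m ∧ 1 ≤ n ∧ g = zz x y m n})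

/-- `w_{i,j,k} = ∏_{t=1}^{2^k−1} [z_{i+t,j+t−1}, x, (2^k−1−t)…, x]`,
factors in order of increasing `t` (reindexed by `t ↦ t+1`). -/
def ww (x y : G) (i j k : ℕ) : G :=
  ((List.range (2 ^ k - 1)).map
    (fun t => itc x (zz x y (i + t + 1) (j + t)) (2 ^ k - 2 - t))).prod

/-- `L_k`, the normal closure of `{w_{i,j,k} : i,j ≥ 1} ∪ {z_{m,n} : m ≥ 2^k, n ≥ 1}`. -/
def Lsub (x y : G) (k : ℕ) : Subgroup G :=
  Subgroup.normalClosure ({g | ∃ i j, 1 ≤ i ∧ 1 ≤ j ∧ g = ww x y i j k} ∪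
    {g | ∃ m n, 2 ^ k ≤ m ∧ 1 ≤ n ∧ g = zz x y m n})

/-- `Q_k = ⟨c_l² : l ≥ 2^{k−1}⟩`. -/
def Qsub (x y : G) (k : ℕ) : Subgroup G :=
  Subgroup.closure {g | ∃ l, 2 ^ (k - 1) ≤ l ∧ g = cc x y l ^ 2}

/-- `d_k(h) = [h,x,(2^k−1)…,x]⁻¹ · x^{−2^k} · (xh)^{2^k}`. -/
def dd (x y : G) (k : ℕ) (h : G) : G :=
  (itc x h (2 ^ k - 1))⁻¹ * (x ^ 2 ^ k)⁻¹ * (x * h) ^ 2 ^ k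

/-- `Γ^{2^k} = ⟨g^{2^k} : g ∈ Γ⟩`. -/
def pow2Sub (G : Type*) [Group G] (k : ℕ) : Subgroup G :=
  Subgroup.closure {g | ∃ a : G, g = a ^ 2 ^ k}

/-- `ζ(h₁,h₂) = ∏_{ℓ=0}^{2^k−2} [h₁^x, x, (ℓ)…, x, h₂, x, (2^k−2−ℓ)…, x]`,
factors in order of increasing `ℓ`. -/
def zeta (x : G) (k : ℕ) (h₁ h₂ : G) : G :=
  ((List.range (2 ^ k - 1)).map
    (fun l => itc x (pc (itc x (x⁻¹ * h₁ * x) l) h₂) (2 ^ k - 2 - l))).prod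

/-!
Conjugation by `x` maps `Z` into itself, and `Z` is abelian, so `z ↦ [z, x]` is an endomorphism
of `Z` and it suffices to treat the generators. For `c_l²` one computes
`[c_l², x, (r)…, x] = c_{l+r}² · ∏_{t<r} [z_{l+t+1,l+t}, x, (r−1−t)…, x]`, which for `r = 2^k − 1`
is `c_{l+2^k−1}² · w_{l,l,k} ∈ Q_k L_k`. For `z_{i+1,j}`, the products `w` telescope:
`[w_{i,j,k}, x] · z_{i+2^k,j+2^k−1} = [z_{i+1,j}, x, (2^k−1)…, x] · w_{i+1,j+1,k}`,
and every other factor lies in the normal subgroup `L_k`; finally `z_{1,n} = z_{n,1}⁻¹`.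
-/

theorem conj_eq_mul_pc (a x : G) : x⁻¹ * a * x = a * pc a x := by
  unfold pc; group

theorem pc_one_left (b : G) : pc 1 b = 1 := by
  unfold pc; group

theorem pc_self (a : G) : pc a a = 1 := by
  unfold pc; group

theorem pc_inv (a b : G) : (pc a b)⁻¹ = pc b a := by
  unfold pc; group

theorem conj_pc (a b g : G) : g⁻¹ * pc a b * g = pc (g⁻¹ * a * g) (g⁻¹ * b * g) := by
  unfold pc; group

theorem pc_mul_left_of_commute {a b c : G} (h : Commute (pc a c) b) :
    pc (a * b) c = pc a c * pc b c := by
  calc pc (a * b) c = b⁻¹ * pc a c * (c⁻¹ * b * c) := by unfold pc; group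
    _ = pc a c * b⁻¹ * (c⁻¹ * b * c) := by rw [h.inv_right.eq]
    _ = pc a c * pc b c := by unfold pc; group

theorem pc_mul_right_of_commute {a c d : G} (h : Commute (pc a c) d) :
    pc a (c * d) = pc a d * pc a c := by
  calc pc a (c * d) = pc a d * (d⁻¹ * (pc a c * d)) := by unfold pc; group
    _ = pc a d * pc a c := by rw [h.eq]; group

theorem mul_sq_of_commute {a b : G} (h : Commute (pc b a) b) :
    (a * b) ^ 2 = a ^ 2 * b ^ 2 * pc b a := by
  calc (a * b) ^ 2 = a * a * b * (pc b a * b) := by rw [pow_two]; unfold pc; group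
    _ = a ^ 2 * b ^ 2 * pc b a := by rw [h.eq, pow_two, pow_two]; group

theorem pc_sq_of_commute {a x : G} (h : Commute (pc (pc a x) a) (pc a x)) :
    pc (a ^ 2) x = pc a x ^ 2 * pc (pc a x) a := by
  calc pc (a ^ 2) x = (a ^ 2)⁻¹ * (a * pc a x) ^ 2 := by
        rw [← conj_eq_mul_pc, pow_two (x⁻¹ * a * x), pow_two a]; unfold pc; group
    _ = pc a x ^ 2 * pc (pc a x) a := by rw [mul_sq_of_commute h]; group

theorem itc_one (x : G) (r : ℕ) : itc x 1 r = 1 := by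
  induction r with
  | zero => rfl
  | succ r ih => rw [itc, ih, pc_one_left]

theorem pc_mem_of_normal {N : Subgroup G} (hN : N.Normal) {a : G} (ha : a ∈ N) (g : G) :
    pc a g ∈ N := by
  rw [show pc a g = a⁻¹ * (g⁻¹ * a * g⁻¹⁻¹) by unfold pc; group]
  exact mul_mem (inv_mem ha) (hN.conj_mem a ha g⁻¹)

def itcProd (x : G) (f : ℕ → G) (n : ℕ) : G :=
  ((List.range n).map fun t => itc x (f t) (n - 1 - t)).prod

theorem itcProd_succ (x : G) (f : ℕ → G) (n : ℕ) :
    itcProd x f (n + 1) = itc x (f 0) n * itcProd x (fun t => f (t + 1)) n := by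
  simp only [itcProd, List.range_succ_eq_map, List.map_cons, List.prod_cons, List.map_map,
    Function.comp_def]
  congr 1
  refine congrArg List.prod (List.map_congr_left fun t _ => ?_)
  show itc x (f (t + 1)) (n + 1 - 1 - (t + 1)) = itc x (f (t + 1)) (n - 1 - t)
  congr 1
  omega

section AbelianStable

variable {x : G} {A : Subgroup G} (hAx : ∀ a ∈ A, x⁻¹ * a * x ∈ A)
include hAx

theorem pc_mem_of_conj_mem {a : G} (ha : a ∈ A) : pc a x ∈ A := by
  have h : pc a x = a⁻¹ * (x⁻¹ * a * x) := by unfold pc; group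
  rw [h]
  exact mul_mem (inv_mem ha) (hAx a ha)

theorem itc_mem_of_conj_mem {a : G} (ha : a ∈ A) (r : ℕ) : itc x a r ∈ A := by
  induction r with
  | zero => exact ha
  | succ r ih => exact pc_mem_of_conj_mem hAx ih

theorem itcProd_mem {f : ℕ → G} (hf : ∀ t, f t ∈ A) (n : ℕ) : itcProd x f n ∈ A :=
  list_prod_mem (by
    simp only [List.mem_map]
    rintro _ ⟨t, -, rfl⟩
    exact itc_mem_of_conj_mem hAx (hf t) _)

variable (hA : ∀ a ∈ A, ∀ b ∈ A, Commute a b)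
include hA

theorem pc_mul_of_mem {a b : G} (ha : a ∈ A) (hb : b ∈ A) : pc (a * b) x = pc a x * pc b x :=
  pc_mul_left_of_commute (hA _ (pc_mem_of_conj_mem hAx ha) b hb)

theorem itc_mul_of_mem {a b : G} (ha : a ∈ A) (hb : b ∈ A) (r : ℕ) :
    itc x (a * b) r = itc x a r * itc x b r := by
  induction r with
  | zero => rfl
  | succ r ih =>
    rw [itc, ih, pc_mul_of_mem hAx hA (itc_mem_of_conj_mem hAx ha r)
      (itc_mem_of_conj_mem hAx hb r)]
    rfl

theorem itc_inv_of_mem {a : G} (ha : a ∈ A) (r : ℕ) : itc x a⁻¹ r = (itc x a r)⁻¹ := by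
  rw [eq_inv_iff_mul_eq_one, ← itc_mul_of_mem hAx hA (inv_mem ha) ha, inv_mul_cancel, itc_one]

theorem pc_list_prod_of_mem {l : List G} (hl : ∀ a ∈ l, a ∈ A) :
    pc l.prod x = (l.map fun a => pc a x).prod := by
  induction l with
  | nil => exact pc_one_left x
  | cons a l ih =>
    simp only [List.forall_mem_cons] at hl
    rw [List.prod_cons, List.map_cons, List.prod_cons,
      pc_mul_of_mem hAx hA hl.1 (list_prod_mem hl.2), ih hl.2]

theorem itcProd_succ_of_mem {f : ℕ → G} (hf : ∀ t, f t ∈ A) (n : ℕ) :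
    itcProd x f (n + 1) = pc (itcProd x f n) x * f n := by
  have hmem : ∀ a ∈ (List.range n).map fun t => itc x (f t) (n - 1 - t), a ∈ A := by
    simp only [List.mem_map]
    rintro _ ⟨t, -, rfl⟩
    exact itc_mem_of_conj_mem hAx (hf t) _
  simp only [itcProd]
  rw [pc_list_prod_of_mem hAx hA hmem, List.range_succ, List.map_append,
    List.prod_append, List.map_map]
  simp only [List.map_singleton, List.prod_singleton, Nat.add_sub_cancel, Nat.sub_self]
  congr 2
  refine List.map_congr_left fun t ht => ?_
  rw [List.mem_range] at ht
  show itc x (f t) (n - t) = itc x (f t) (n - 1 - t + 1)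
  congr 1
  omega

theorem itc_eq_pc_itcProd_mul_mul_inv {f : ℕ → G} (hf : ∀ t, f t ∈ A) (n : ℕ) :
    itc x (f 0) n = pc (itcProd x f n) x * f n * (itcProd x (fun t => f (t + 1)) n)⁻¹ := by
  rw [eq_mul_inv_iff_mul_eq, ← itcProd_succ, itcProd_succ_of_mem hAx hA hf]

end AbelianStable

theorem cc_succ (x y : G) {l : ℕ} (hl : 1 ≤ l) : cc x y (l + 1) = pc (cc x y l) x := by
  obtain ⟨m, rfl⟩ := Nat.exists_eq_add_of_le hl
  simp only [cc, Nat.add_sub_cancel, add_comm 1 m, itc]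

theorem zz_self (x y : G) (m : ℕ) : zz x y m m = 1 := pc_self _

theorem zz_inv (x y : G) (m n : ℕ) : (zz x y m n)⁻¹ = zz x y n m := pc_inv _ _

theorem cc_mem_Hsub (x y : G) {l : ℕ} (hl : 1 ≤ l) : cc x y l ∈ Hsub x y :=
  Subgroup.subset_closure ⟨l, hl, rfl⟩

theorem sq_cc_mem_Zsub (x y : G) {l : ℕ} (hl : 1 ≤ l) : cc x y l ^ 2 ∈ Zsub x y :=
  Subgroup.subset_closure (Or.inl ⟨l, hl, rfl⟩)

theorem zz_mem_Zsub (x y : G) {m n : ℕ} (hm : 1 ≤ m) (hn : 1 ≤ n) : zz x y m n ∈ Zsub x y :=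
  Subgroup.subset_closure (Or.inr ⟨m, n, hm, hn, rfl⟩)

theorem Zsub_le_Hsub (x y : G) : Zsub x y ≤ Hsub x y := by
  rw [Zsub, Subgroup.closure_le]
  rintro _ (⟨l, hl, rfl⟩ | ⟨m, n, hm, hn, rfl⟩)
  · exact pow_mem (cc_mem_Hsub x y hl) 2
  · have hcm := cc_mem_Hsub x y hm
    have hcn := cc_mem_Hsub x y hn
    exact mul_mem (mul_mem (mul_mem (inv_mem hcm) (inv_mem hcn)) hcm) hcn

theorem ww_mem_Lsub (x y : G) {i j : ℕ} (k : ℕ) (hi : 1 ≤ i) (hj : 1 ≤ j) :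
    ww x y i j k ∈ Lsub x y k :=
  Subgroup.subset_normalClosure (Or.inl ⟨i, j, hi, hj, rfl⟩)

theorem zz_mem_Lsub (x y : G) {k m n : ℕ} (hm : 2 ^ k ≤ m) (hn : 1 ≤ n) :
    zz x y m n ∈ Lsub x y k :=
  Subgroup.subset_normalClosure (Or.inr ⟨m, n, hm, hn, rfl⟩)

theorem sq_cc_mem_Qsub (x y : G) {k l : ℕ} (hl : 2 ^ (k - 1) ≤ l) :
    cc x y l ^ 2 ∈ Qsub x y k :=
  Subgroup.subset_closure ⟨l, hl, rfl⟩

theorem ww_eq_itcProd (x y : G) (i j k : ℕ) :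
    ww x y i j k = itcProd x (fun t => zz x y (i + t + 1) (j + t)) (2 ^ k - 1) :=
  rfl

section CentralZ

variable (x y : G) (hca : ∀ z ∈ Zsub x y, ∀ h ∈ Hsub x y, z * h = h * z)
include hca

theorem Zsub_commute : ∀ a ∈ Zsub x y, ∀ b ∈ Zsub x y, Commute a b :=
  fun a ha b hb => hca a ha b (Zsub_le_Hsub x y hb)

theorem pc_sq_cc {l : ℕ} (hl : 1 ≤ l) :
    pc (cc x y l ^ 2) x = cc x y (l + 1) ^ 2 * zz x y (l + 1) l := by
  rw [pc_sq_of_commute, ← cc_succ x y hl]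
  · rfl
  · rw [← cc_succ x y hl]
    exact hca _ (zz_mem_Zsub x y (by omega) hl) _ (cc_mem_Hsub x y (by omega))

theorem conj_zz {m n : ℕ} (hm : 1 ≤ m) (hn : 1 ≤ n) :
    x⁻¹ * zz x y m n * x =
      zz x y m (n + 1) * zz x y m n * (zz x y (m + 1) (n + 1) * zz x y (m + 1) n) := by
  have hconj : ∀ {l}, 1 ≤ l → x⁻¹ * cc x y l * x = cc x y l * cc x y (l + 1) :=
    fun hl => by rw [conj_eq_mul_pc, cc_succ x y hl]
  have hH : ∀ {l}, 1 ≤ l → cc x y (l + 1) ∈ Hsub x y := fun _ => cc_mem_Hsub x y (by omega)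
  have hZ : ∀ {a b}, 1 ≤ a → 1 ≤ b → zz x y a b ∈ Zsub x y := zz_mem_Zsub x y
  have hm' : pc (cc x y m) (cc x y n * cc x y (n + 1)) = zz x y m (n + 1) * zz x y m n :=
    pc_mul_right_of_commute (hca _ (hZ hm hn) _ (hH hn))
  rw [zz, conj_pc, hconj hm, hconj hn, pc_mul_left_of_commute, hm',
    pc_mul_right_of_commute (hca _ (hZ (by omega) hn) _ (hH hn))]
  · rfl
  · rw [hm']
    exact hca _ (mul_mem (hZ hm (by omega)) (hZ hm hn)) _ (hH hm)

theorem conj_mem_Zsub : ∀ a ∈ Zsub x y, x⁻¹ * a * x ∈ Zsub x y := by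
  suffices Zsub x y ≤ (Zsub x y).comap (MulAut.conj x⁻¹).toMonoidHom by
    intro a ha
    simpa using this ha
  rw [Zsub, Subgroup.closure_le]
  rintro _ (⟨l, hl, rfl⟩ | ⟨m, n, hm, hn, rfl⟩) <;>
    simp only [SetLike.mem_coe, Subgroup.mem_comap, MulEquiv.coe_toMonoidHom,
      MulAut.conj_apply, inv_inv]
  · rw [conj_eq_mul_pc, pc_sq_cc x y hca hl]
    exact mul_mem (sq_cc_mem_Zsub x y hl)
      (mul_mem (sq_cc_mem_Zsub x y (by omega)) (zz_mem_Zsub x y (by omega) hl))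
  · rw [conj_zz x y hca hm hn]
    have hZ : ∀ {a b}, 1 ≤ a → 1 ≤ b → zz x y a b ∈ Zsub x y := zz_mem_Zsub x y
    exact mul_mem (mul_mem (hZ hm (by omega)) (hZ hm hn))
      (mul_mem (hZ (by omega) (by omega)) (hZ (by omega) hn))

theorem itc_sq_cc {l : ℕ} (hl : 1 ≤ l) (r : ℕ) :
    itc x (cc x y l ^ 2) r =
      cc x y (l + r) ^ 2 * itcProd x (fun t => zz x y (l + t + 1) (l + t)) r := by
  have hf : ∀ t, zz x y (l + t + 1) (l + t) ∈ Zsub x y :=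
    fun t => zz_mem_Zsub x y (by omega) (by omega)
  have hZx := conj_mem_Zsub x y hca
  have hZ := Zsub_commute x y hca
  induction r with
  | zero => simp [itc, itcProd]
  | succ r ih =>
    have hP := itcProd_mem hZx hf r
    rw [itc, ih, pc_mul_of_mem hZx hZ (sq_cc_mem_Zsub x y (by omega)) hP,
      pc_sq_cc x y hca (by omega),
      itcProd_succ_of_mem hZx hZ hf, mul_assoc,
      (hZ _ (zz_mem_Zsub x y (by omega) (by omega)) _ (pc_mem_of_conj_mem hZx hP)).eq]
    rfl

theorem itc_zz_mem_Lsub_of_two_le (k : ℕ) {m n : ℕ} (hm : 2 ≤ m) (hn : 1 ≤ n) :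
    itc x (zz x y m n) (2 ^ k - 1) ∈ Lsub x y k := by
  obtain ⟨i, rfl⟩ : ∃ i, m = i + 1 := ⟨m - 1, by omega⟩
  have hk := Nat.one_le_two_pow (n := k)
  have htel := itc_eq_pc_itcProd_mul_mul_inv (conj_mem_Zsub x y hca) (Zsub_commute x y hca)
    (f := fun t => zz x y (i + t + 1) (n + t)) (fun t => zz_mem_Zsub x y (by omega) (by omega))
    (2 ^ k - 1)
  have hw : ww x y (i + 1) (n + 1) k
      = itcProd x (fun t => zz x y (i + (t + 1) + 1) (n + (t + 1))) (2 ^ k - 1) := by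
    rw [ww_eq_itcProd]
    congr 2 with t
    congr 1 <;> omega
  simp only [add_zero] at htel
  rw [htel, ← ww_eq_itcProd, ← hw]
  exact mul_mem (mul_mem
    (pc_mem_of_normal Subgroup.normalClosure_normal (ww_mem_Lsub x y k (by omega) hn) x)
    (zz_mem_Lsub x y (by omega) (by omega))) (inv_mem (ww_mem_Lsub x y k (by omega) (by omega)))

theorem itc_zz_mem_Lsub (k : ℕ) {m n : ℕ} (hm : 1 ≤ m) (hn : 1 ≤ n) :
    itc x (zz x y m n) (2 ^ k - 1) ∈ Lsub x y k := by
  rcases (show m = 1 ∧ n = 1 ∨ m = 1 ∧ 2 ≤ n ∨ 2 ≤ m by omega) with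
    ⟨rfl, rfl⟩ | ⟨rfl, hn⟩ | hm
  · rw [zz_self, itc_one]
    exact one_mem _
  · rw [← zz_inv, itc_inv_of_mem (conj_mem_Zsub x y hca) (Zsub_commute x y hca)
      (zz_mem_Zsub x y (by omega) le_rfl)]
    exact inv_mem (itc_zz_mem_Lsub_of_two_le x y hca k hn le_rfl)
  · exact itc_zz_mem_Lsub_of_two_le x y hca k hm hn

end CentralZ

theorem lemma_Lk_i_general (x y : G)
    (hca : ∀ z ∈ Zsub x y, ∀ h ∈ Hsub x y, z * h = h * z)
    (k : ℕ) (z : G) (hz : z ∈ Zsub x y) :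
    itc x z (2 ^ k - 1) ∈ Lsub x y k ⊔ Qsub x y k := by
  have hZx := conj_mem_Zsub x y hca
  have hZ := Zsub_commute x y hca
  induction hz using Subgroup.closure_induction with
  | mem g hg =>
    rcases hg with ⟨l, hl, rfl⟩ | ⟨m, n, hm, hn, rfl⟩
    · rw [itc_sq_cc x y hca hl, ← ww_eq_itcProd]
      have hk := Nat.one_le_two_pow (n := k)
      have hk' := Nat.pow_le_pow_right two_pos (Nat.sub_le k 1)
      exact mul_mem (Subgroup.mem_sup_right (sq_cc_mem_Qsub x y (by omega)))
        (Subgroup.mem_sup_left (ww_mem_Lsub x y k hl hl))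
    · exact Subgroup.mem_sup_left (itc_zz_mem_Lsub x y hca k hm hn)
  | one =>
    rw [itc_one]
    exact one_mem _
  | mul g h hg hh ihg ihh =>
    rw [itc_mul_of_mem hZx hZ hg hh]
    exact mul_mem ihg ihh
  | inv g hg ihg =>
    rw [itc_inv_of_mem hZx hZ hg]
    exact inv_mem ihg

theorem lemma_Lk_i (x y : G)
    (hca : ∀ z ∈ Zsub x y, ∀ h ∈ Hsub x y, z * h = h * z)
    (hz2 : ∀ z ∈ Zsub x y, z ^ 2 = 1)
    (k : ℕ) (hk : 1 ≤ k) (z : G) (hz : z ∈ Zsub x y) :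
    itc x z (2 ^ k - 1) ∈ Lsub x y k ⊔ Qsub x y k :=
  lemma_Lk_i_general x y hca k z hz

end Paper
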